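/- Let (𝒞,∂,𝒜) be as above and let (𝒞',∂') be an ε-isolated subcomplex with nonzero homology. Let ξ ∈ 𝒞' be a cycle of ∂' representing a nonzero homology class of 𝒞' whose action 𝒜(ξ) is minimal among all such representatives. Then ξ is quasi ε-robust in 𝒞: for any vectors y, τ ∈ 𝒞 with 𝒜(τ) < 𝒜(ξ) and ∂y = ξ + τ, it holds that 𝒜(y) − 𝒜(ξ) > ε. -/

import Mathlib

/-! If `𝒜(y) ≤ 𝒜(ξ) + ε`, split `y = u + v` with `u ∈ 𝒞'` and `v ∈ (𝒞')^⊥`. Then `ξ - ∂'u` is a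
`∂'`-cycle of `𝒞'` homologous to `ξ`, and it is the `𝒞'`-component of `(∂ - ∂')u + ∂v - τ`.
Condition (i) puts `(∂ - ∂')u`, and condition (ii) the `𝒞'`-component of `∂v`, strictly below
`𝒜(ξ)`, as is `τ`; so `𝒜(ξ - ∂'u) < 𝒜(ξ)`, contradicting the minimality of `ξ`. -/

open Finsupp

variable {ι : Type*} [Fintype ι] [DecidableEq ι]

/-- The action (filtration level) of a vector in the `ZMod 2`-vector space with
basis `ι` and basis actions `a : ι → ℝ`: the maximum of the actions of the
basis elements appearing, with `𝒜(0) = ⊥`. -/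
noncomputable def act (a : ι → ℝ) (v : ι →₀ ZMod 2) : EReal :=
  v.support.sup fun i => ((a i : ℝ) : EReal)

/-- `(𝒞',∂')`, spanned by the basis vectors indexed by `S`, is `ε`-isolated in
`(𝒞,∂)`: (i) for every nonzero `y ∈ 𝒞'`, `𝒜(y) − 𝒜((∂−∂')y) > ε`; (ii) for
every nonzero `y ∈ (𝒞')^⊥` and `ζ ∈ 𝒞'` with `ζ + ∂y ∈ (𝒞')^⊥`,
`𝒜(y) − 𝒜(ζ) > ε`. -/
def IsIsolated (a : ι → ℝ) (d d' : (ι →₀ ZMod 2) →ₗ[ZMod 2] (ι →₀ ZMod 2))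
    (S : Set ι) (ε : ℝ) : Prop :=
  (∀ y ∈ Finsupp.supported (ZMod 2) (ZMod 2) S, y ≠ 0 →
      act a ((d - d') y) + (ε : EReal) < act a y) ∧
  (∀ y ∈ Finsupp.supported (ZMod 2) (ZMod 2) Sᶜ, y ≠ 0 →
      ∀ ζ ∈ Finsupp.supported (ZMod 2) (ZMod 2) S,
        ζ + d y ∈ Finsupp.supported (ZMod 2) (ZMod 2) Sᶜ →
        act a ζ + (ε : EReal) < act a y)


section Action

variable {ι : Type*} (a : ι → ℝ)

lemma act_zero : act a 0 = ⊥ := by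
  simp [act]

lemma bot_lt_act {v : ι →₀ ZMod 2} (hv : v ≠ 0) : ⊥ < act a v := by
  obtain ⟨i, hi⟩ := support_nonempty_iff.2 hv
  exact (EReal.bot_lt_coe (a i)).trans_le (Finset.le_sup (f := fun i => ((a i : ℝ) : EReal)) hi)

lemma act_neg (v : ι →₀ ZMod 2) : act a (-v) = act a v := by
  rw [act, act, support_neg]

lemma act_filter_le (p : ι → Prop) [DecidablePred p] (v : ι →₀ ZMod 2) :
    act a (v.filter p) ≤ act a v :=
  Finset.sup_mono (Finset.filter_subset _ _)

variable {a}

lemma act_add_lt {v w : ι →₀ ZMod 2} {t : EReal} (hv : act a v < t) (hw : act a w < t) :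
    act a (v + w) < t := by
  classical
  exact (Finset.sup_mono support_add).trans_lt (by rw [Finset.sup_union]; exact max_lt hv hw)

lemma act_sub_lt {v w : ι →₀ ZMod 2} {t : EReal} (hv : act a v < t) (hw : act a w < t) :
    act a (v - w) < t := by
  rw [sub_eq_add_neg]
  exact act_add_lt hv ((act_neg a w).trans_lt hw)

end Action

lemma Finsupp.filter_mem_supported {α M R : Type*} [Semiring R] [AddCommMonoid M] [Module R M]
    (p : α → Prop) [DecidablePred p] (f : α →₀ M) : f.filter p ∈ supported M R {x | p x} :=
  (mem_supported' _ _).2 fun _ => filter_apply_neg p f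

lemma forall_apply_ne_sub_apply {R M N : Type*} [Ring R] [AddCommGroup M] [AddCommGroup N]
    [Module R M] [Module R N] {f : M →ₗ[R] N} {p : Submodule R M} {x : N}
    (hx : ∀ y ∈ p, f y ≠ x) {u : M} (hu : u ∈ p) : ∀ y ∈ p, f y ≠ x - f u :=
  fun y hy hyx => hx (y + u) (add_mem hy hu) (by rw [map_add, hyx, sub_add_cancel])

namespace IsIsolated

variable {ι : Type*} {a : ι → ℝ} {d d' : (ι →₀ ZMod 2) →ₗ[ZMod 2] (ι →₀ ZMod 2)} {S : Set ι}
  {ε : ℝ} {t : EReal}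

lemma act_sub_apply_lt (hiso : IsIsolated a d d' S ε) {u : ι →₀ ZMod 2}
    (hu : u ∈ supported (ZMod 2) (ZMod 2) S) (ht : ⊥ < t) (hut : act a u ≤ t + ε) :
    act a ((d - d') u) < t := by
  rcases eq_or_ne u 0 with rfl | hu0
  · rwa [map_zero, act_zero]
  · exact lt_of_add_lt_add_right ((hiso.1 u hu hu0).trans_le hut)

lemma act_filter_apply_lt (hiso : IsIsolated a d d' S ε) [DecidablePred (· ∈ S)]
    {v : ι →₀ ZMod 2} (hv : v ∈ supported (ZMod 2) (ZMod 2) Sᶜ) (ht : ⊥ < t)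
    (hvt : act a v ≤ t + ε) : act a ((d v).filter (· ∈ S)) < t := by
  rcases eq_or_ne v 0 with rfl | hv0
  · rwa [map_zero, filter_zero, act_zero]
  · -- Take ζ := -π_S(∂v) in (ii), so that ζ + ∂v = π_{Sᶜ}(∂v).
    have hζ : -(d v).filter (· ∈ S) + d v ∈ supported (ZMod 2) (ZMod 2) Sᶜ := by
      rw [neg_add_eq_sub, sub_eq_of_eq_add' (filter_add_filter_not (d v) _).symm]
      exact filter_mem_supported _ _
    have := hiso.2 v hv hv0 _ (neg_mem (filter_mem_supported (· ∈ S) _)) hζ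
    rw [act_neg] at this
    exact lt_of_add_lt_add_right (this.trans_le hvt)

end IsIsolated

theorem minimal_cycle_quasi_robust_general
    (a : ι → ℝ)
    (d d' : (ι →₀ ZMod 2) →ₗ[ZMod 2] (ι →₀ ZMod 2))
    (hd' : d' ∘ₗ d' = 0)
    (S : Set ι) (ε : ℝ)
    (hsub : ∀ y ∈ Finsupp.supported (ZMod 2) (ZMod 2) S,
      d' y ∈ Finsupp.supported (ZMod 2) (ZMod 2) S)
    (hiso : IsIsolated a d d' S ε)
    (ξ : ι →₀ ZMod 2)
    (hξS : ξ ∈ Finsupp.supported (ZMod 2) (ZMod 2) S)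
    (hξcycle : d' ξ = 0)
    (hξnontriv : ∀ y ∈ Finsupp.supported (ZMod 2) (ZMod 2) S, d' y ≠ ξ)
    (hξmin : ∀ ξ' ∈ Finsupp.supported (ZMod 2) (ZMod 2) S, d' ξ' = 0 →
      (∀ y ∈ Finsupp.supported (ZMod 2) (ZMod 2) S, d' y ≠ ξ') →
      act a ξ ≤ act a ξ') :
    ∀ y τ : ι →₀ ZMod 2, act a τ < act a ξ → d y = ξ + τ →
      act a ξ + (ε : EReal) < act a y := by
  classical
  intro y τ hτ hdy
  by_contra! hy
  have hξ : ⊥ < act a ξ := bot_lt_act a fun h => hξnontriv 0 (zero_mem _) (by rw [h, map_zero])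
  set u := y.filter (· ∈ S)
  set v := y.filter (· ∉ S)
  have hu : u ∈ supported (ZMod 2) (ZMod 2) S := filter_mem_supported (· ∈ S) _
  have hdu := hiso.act_sub_apply_lt hu hξ ((act_filter_le a _ y).trans hy)
  have hdv := hiso.act_filter_apply_lt (filter_mem_supported _ y) hξ
    ((act_filter_le a _ y).trans hy)
  have hsplit : d u + d v = ξ + τ := by rw [← map_add, filter_add_filter_not, hdy]
  have hS : ξ - d' u ∈ supported (ZMod 2) (ZMod 2) S := sub_mem hξS (hsub u hu)
  have hrepr : ξ - d' u = ((d - d') u + d v - τ).filter (· ∈ S) := calc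
    ξ - d' u = (ξ - d' u).filter (· ∈ S) :=
      ((filter_eq_self_iff _ _).2 fun i hi => hS (mem_support_iff.2 hi)).symm
    _ = ((d - d') u + d v - τ).filter (· ∈ S) := by
      congr 1
      rw [LinearMap.sub_apply]
      linear_combination (norm := module) -hsplit
  have hcycle : d' (ξ - d' u) = 0 := by
    rw [map_sub, hξcycle, ← LinearMap.comp_apply, hd', LinearMap.zero_apply, sub_zero]
  refine (hξmin _ hS hcycle (forall_apply_ne_sub_apply hξnontriv hu)).not_gt ?_
  rw [hrepr, filter_sub, filter_add]
  exact act_sub_lt (act_add_lt ((act_filter_le a _ _).trans_lt hdu) hdv)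
    ((act_filter_le a _ _).trans_lt hτ)

/-- Quasi `ε`-robustness of the minimal-action representative: if `(𝒞',∂')` is
an `ε`-isolated subcomplex with nonzero homology and `ξ ∈ 𝒞'` is a `∂'`-cycle
representing a nonzero homology class of `𝒞'` with minimal action among all
such representatives, then for any `y, τ` with `𝒜(τ) < 𝒜(ξ)` and `∂y = ξ + τ`
we have `𝒜(y) − 𝒜(ξ) > ε`. -/
theorem minimal_cycle_quasi_robust
    (a : ι → ℝ) (ha : Function.Injective a)
    (d d' : (ι →₀ ZMod 2) →ₗ[ZMod 2] (ι →₀ ZMod 2))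
    (hd : d ∘ₗ d = 0) (hd' : d' ∘ₗ d' = 0)
    (S : Set ι) (ε : ℝ) (hε : 0 < ε)
    (hsub : ∀ y ∈ Finsupp.supported (ZMod 2) (ZMod 2) S,
      d' y ∈ Finsupp.supported (ZMod 2) (ZMod 2) S)
    (hiso : IsIsolated a d d' S ε)
    (ξ : ι →₀ ZMod 2)
    (hξS : ξ ∈ Finsupp.supported (ZMod 2) (ZMod 2) S)
    (hξcycle : d' ξ = 0)
    (hξnontriv : ∀ y ∈ Finsupp.supported (ZMod 2) (ZMod 2) S, d' y ≠ ξ)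
    (hξmin : ∀ ξ' ∈ Finsupp.supported (ZMod 2) (ZMod 2) S, d' ξ' = 0 →
      (∀ y ∈ Finsupp.supported (ZMod 2) (ZMod 2) S, d' y ≠ ξ') →
      act a ξ ≤ act a ξ') :
    ∀ y τ : ι →₀ ZMod 2, act a τ < act a ξ → d y = ξ + τ →
      act a ξ + (ε : EReal) < act a y :=
  minimal_cycle_quasi_robust_general a d d' hd' S ε hsub hiso ξ hξS hξcycle hξnontriv hξmin
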